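/- arXiv:2402.11648 — 2 statements merged into one kernel-verified Lean document; each statement's English description precedes it below -/
import Mathlib

section
/- Liouville's formula: if Φ̇(t) = M(t)Φ(t) with Φ(t₀) = I and M continuous, then det Φ(t) = exp(∫_{t₀}^t tr M(s) ds) for all t in the interval. -/
/-!
By Jacobi's formula, `(det Φ)'` is the sum over `i` of `det Φ` with row `i` replaced by row `i`
of `Φ' = MΦ`, i.e. by `∑ₖ M i k • Φ k`; only the `k = i` term survives, so
`(det Φ)' = tr M · det Φ`. Multiplying by the integrating factor `exp (-∫_{t₀}^t tr M)` gives
a function with vanishing right derivative, hence constant, equal to `det Φ(t₀) = 1`.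
-/

open Set Matrix

namespace Matrix

variable {𝕜 n : Type*} [NontriviallyNormedField 𝕜] [Fintype n] [DecidableEq n]

variable (𝕜 n) in
noncomputable def detRowContinuousMultilinear :
    ContinuousMultilinearMap 𝕜 (fun _ : n ↦ n → 𝕜) 𝕜 where
  toMultilinearMap := detRowAlternating.toMultilinearMap
  cont := continuous_id.matrix_det

theorem sum_det_updateRow_mul {R : Type*} [CommRing R] (M A : Matrix n n R) :
    ∑ i, (A.updateRow i ((M * A) i)).det = M.trace * A.det := by
  have hrow : ∀ i, (M * A) i = ∑ k, M i k • A k := fun i ↦ by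
    ext j; simp [mul_apply, Finset.sum_apply]
  simp_rw [hrow, det_updateRow_sum, trace, diag, smul_eq_mul, Finset.sum_mul]

end Matrix

theorem HasDerivAt.matrix_det {𝕜 n : Type*} [NontriviallyNormedField 𝕜] [Fintype n] [DecidableEq n]
    {Φ : 𝕜 → Matrix n n 𝕜} {Φ' : Matrix n n 𝕜} {t : 𝕜}
    (h : ∀ i j, HasDerivAt (fun s ↦ Φ s i j) (Φ' i j) t) :
    HasDerivAt (fun s ↦ (Φ s).det) (∑ i, ((Φ t).updateRow i (Φ' i)).det) t := by
  have hrows : ∀ i, HasFDerivAt (fun s ↦ Φ s i) ((1 : 𝕜 →L[𝕜] 𝕜).smulRight (Φ' i)) t :=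
    fun i ↦ hasDerivAt_pi.mpr (h i) |>.hasFDerivAt
  refine (HasFDerivAt.multilinear_comp (detRowContinuousMultilinear 𝕜 n) hrows).hasDerivAt
    |>.congr_deriv ?_
  simp only [_root_.sum_apply, ContinuousLinearMap.comp_apply, ContinuousLinearMap.smulRight_apply,
    one_apply_eq_self, one_smul, ContinuousMultilinearMap.toContinuousLinearMap_apply,
    updateRow]
  rfl

theorem ContinuousOn.hasDerivWithinAt_integral_Icc {E : Type*} [NormedAddCommGroup E]
    [NormedSpace ℝ E] [CompleteSpace E] {f : ℝ → E} {a b x : ℝ}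
    (hf : ContinuousOn f (Icc a b)) (hx : x ∈ Icc a b) :
    HasDerivWithinAt (fun u ↦ ∫ s in a..u, f s) (f x) (Icc a b) x := by
  have : Fact (x ∈ Icc a b) := ⟨hx⟩
  refine intervalIntegral.integral_hasDerivWithinAt_right ?_
    (hf.stronglyMeasurableAtFilter_nhdsWithin measurableSet_Icc x) (hf x hx)
  exact (hf.mono (uIcc_of_le hx.1 ▸ Icc_subset_Icc_right hx.2)).intervalIntegrable

theorem eq_mul_exp_integral_of_hasDerivWithinAt {f g : ℝ → ℝ} {a b : ℝ}
    (hf : ContinuousOn f (Icc a b))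
    (hg : ∀ x ∈ Icc a b, HasDerivWithinAt g (f x * g x) (Icc a b) x) :
    ∀ x ∈ Icc a b, g x = g a * Real.exp (∫ s in a..x, f s) := by
  set F : ℝ → ℝ := fun u ↦ ∫ s in a..u, f s
  have hderiv : ∀ x ∈ Icc a b,
      HasDerivWithinAt (fun u ↦ g u * Real.exp (-F u)) 0 (Icc a b) x := fun x hx ↦ by
    refine ((hg x hx).mul (hf.hasDerivWithinAt_integral_Icc hx).neg.exp).congr_deriv ?_
    ring
  have hconst := constant_of_has_deriv_right_zero
    (fun x hx ↦ (hderiv x hx).continuousWithinAt)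
    (fun x hx ↦ (hderiv x (Ico_subset_Icc_self hx)).mono_of_mem_nhdsWithin
      (Icc_mem_nhdsGE_of_mem hx))
  intro x hx
  have hx' := hconst x hx
  simp only [F, intervalIntegral.integral_same, neg_zero, Real.exp_zero, mul_one,
    Real.exp_neg] at hx'
  rw [← hx', mul_assoc, inv_mul_cancel₀ (Real.exp_pos _).ne', mul_one]

theorem liouville_formula_general {N : ℕ}
    (t₀ t₁ : ℝ)
    (M : ℝ → Matrix (Fin N) (Fin N) ℝ)
    (hM : ∀ i j, ContinuousOn (fun t => M t i j) (Icc t₀ t₁))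
    (Φ : ℝ → Matrix (Fin N) (Fin N) ℝ)
    (hode : ∀ t ∈ Icc t₀ t₁, ∀ i j,
      HasDerivAt (fun s => Φ s i j) ((M t * Φ t) i j) t)
    (hinit : Φ t₀ = 1) :
    ∀ t ∈ Icc t₀ t₁,
      (Φ t).det = Real.exp (∫ s in t₀..t, Matrix.trace (M s)) := by
  have htrace : ContinuousOn (fun s ↦ (M s).trace) (Icc t₀ t₁) :=
    continuousOn_finsetSum _ fun i _ ↦ hM i i
  have hdet : ∀ s ∈ Icc t₀ t₁, HasDerivWithinAt (fun u ↦ (Φ u).det)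
      ((M s).trace * (Φ s).det) (Icc t₀ t₁) s := fun s hs ↦ by
    rw [← sum_det_updateRow_mul]
    exact (HasDerivAt.matrix_det (hode s hs)).hasDerivWithinAt
  simpa [hinit] using eq_mul_exp_integral_of_hasDerivWithinAt htrace hdet

/-- Liouville's formula: if `Φ̇(t) = M(t)Φ(t)` with `Φ(t₀) = I` and `M` continuous, then
`det Φ(t) = exp (∫_{t₀}^t tr M(s) ds)`. -/
theorem liouville_formula {N : ℕ}
    (t₀ t₁ : ℝ) (ht : t₀ ≤ t₁)
    (M : ℝ → Matrix (Fin N) (Fin N) ℝ)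
    (hM : ∀ i j, ContinuousOn (fun t => M t i j) (Icc t₀ t₁))
    (Φ : ℝ → Matrix (Fin N) (Fin N) ℝ)
    (hode : ∀ t ∈ Icc t₀ t₁, ∀ i j,
      HasDerivAt (fun s => Φ s i j) ((M t * Φ t) i j) t)
    (hinit : Φ t₀ = 1) :
    ∀ t ∈ Icc t₀ t₁,
      (Φ t).det = Real.exp (∫ s in t₀..t, Matrix.trace (M s)) :=
  liouville_formula_general t₀ t₁ M hM Φ hode hinit
end

section
/- Consider the coupled system q̇ = Fq + n_s(t, q, p), ṗ = −F᙮p + n_u(t, q, p) where F ∈ ℝ^{n×n} has all eigenvalues with negative real part, and n_s, n_u are continuous with n_s, n_u and their Lipschitz constants in (q, p) of order O(‖(q,p)‖²) near 0 (uniformly in t). Define the Picard-type iteration q_{k+1}(t) = e^{Ft}ξ + ∫₀^t e^{F(t−s)} n_s(s, q_k(s), p_k(s)) ds, p_{k+1}(t) = −∫_t^∞ e^{−F᙮(t−s)} n_u(s, q_k(s), p_k(s)) ds, with q₀(t) = e^{Ft}ξ, p₀ = 0. Then for ‖ξ‖ sufficiently small, every iterate satisfies q_k(t) → 0 and p_k(t)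 → 0 as t → ∞. -/
open Matrix MeasureTheory Filter

section StableManifoldAux

open NormedSpace
open scoped Nat

attribute [local instance] Matrix.linftyOpNormedAddCommGroup Matrix.linftyOpNormedRing
  Matrix.linftyOpNormedAlgebra

variable {n : ℕ}

-- pow eigenvector
lemma pow_mulVec_eig (B : Matrix (Fin n) (Fin n) ℂ) (l : ℂ) (w : Fin n → ℂ)
    (h : B.mulVec w = l • w) (k : ℕ) : (B ^ k).mulVec w = (l ^ k) • w := by
  induction k with
  | zero => simp
  | succ k ih =>
    rw [pow_succ, ← Matrix.mulVec_mulVec, h, Matrix.mulVec_smul, ih, smul_smul, pow_succ]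
    ring_nf

lemma exp_mulVec_eig (B : Matrix (Fin n) (Fin n) ℂ) (l : ℂ) (w : Fin n → ℂ)
    (h : B.mulVec w = l • w) : (exp B).mulVec w = Complex.exp l • w := by
  classical
  let Phi : Matrix (Fin n) (Fin n) ℂ →ₗ[ℂ] (Fin n → ℂ) :=
    { toFun := fun A => A.mulVec w
      map_add' := fun A1 A2 => Matrix.add_mulVec A1 A2 w
      map_smul' := fun c A => Matrix.smul_mulVec c A w }
  let Phi' := LinearMap.toContinuousLinearMap Phi
  have hPhi : ∀ A, Phi' A = A.mulVec w := fun _ => rfl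
  have hsum : Summable fun k : ℕ => (k !⁻¹ : ℂ) • B ^ k := expSeries_summable' B
  have : (exp B).mulVec w = ∑' k : ℕ, (k !⁻¹ : ℂ) • (B ^ k).mulVec w := by
    rw [exp_eq_tsum ℂ, ← hPhi, Phi'.map_tsum hsum]
    exact tsum_congr fun k => by rw [_root_.map_smul]; rfl
  rw [this]
  have h2 : ∀ k : ℕ, (k !⁻¹ : ℂ) • (B ^ k).mulVec w = ((k !⁻¹ : ℂ) * l ^ k) • w := by
    intro k; rw [pow_mulVec_eig B l w h, smul_smul]
  have hsum2 : Summable fun k : ℕ => (k !⁻¹ : ℂ) * l ^ k := by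
    simpa [smul_eq_mul] using expSeries_summable' (𝕂 := ℂ) l
  rw [tsum_congr h2, hsum2.tsum_smul_const, Complex.exp_eq_exp_ℂ, exp_eq_tsum ℂ]
  simp [smul_eq_mul]

lemma spec_exp (B : Matrix (Fin n) (Fin n) ℂ) (μ : ℂ) (hμ : μ ∈ spectrum ℂ (exp B)) :
    ∃ l ∈ spectrum ℂ B, μ = Complex.exp l := by
  classical
  set f := Matrix.toLinAlgEquiv' B with hf
  set g := Matrix.toLinAlgEquiv' (exp B) with hg
  have hμg : μ ∈ spectrum ℂ g := by rwa [AlgEquiv.spectrum_eq]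
  have hev : Module.End.HasEigenvalue g μ :=
    Module.End.hasEigenvalue_iff_mem_spectrum.2 hμg
  obtain ⟨v, hv⟩ := hev.exists_hasEigenvector
  set W := Module.End.eigenspace g μ with hWdef
  have hcomm : f * g = g * f := by
    rw [← _root_.map_mul, ← _root_.map_mul]
    congr 1
    exact ((Commute.refl B).exp_right).eq
  have hW : ∀ x ∈ W, f x ∈ W := by
    intro x hx
    rw [hWdef, Module.End.mem_eigenspace_iff] at hx ⊢
    have : g (f x) = f (g x) := by
      rw [← Module.End.mul_apply, ← Module.End.mul_apply, hcomm]
    rw [this, hx, _root_.map_smul]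
  haveI : Nontrivial W := nontrivial_of_ne ⟨v, hv.1⟩ 0 (fun h => hv.2 (congrArg Subtype.val h))
  obtain ⟨l, hl⟩ := Module.End.exists_eigenvalue (LinearMap.restrict f hW)
  obtain ⟨w, hw⟩ := hl.exists_hasEigenvector
  have hfw : f ↑w = l • (↑w : Fin n → ℂ) := congrArg Subtype.val hw.apply_eq_smul
  have hwne : (↑w : Fin n → ℂ) ≠ 0 := fun h => hw.2 (Subtype.ext h)
  have hBw : B.mulVec ↑w = l • (↑w : Fin n → ℂ) := by
    rw [← Matrix.toLin'_apply]
    exact hfw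
  have hgw : (exp B).mulVec ↑w = μ • (↑w : Fin n → ℂ) := by
    rw [← Matrix.toLin'_apply]
    exact Module.End.mem_eigenspace_iff.1 w.2
  have hexp := exp_mulVec_eig B l ↑w hBw
  have : (μ - Complex.exp l) • (↑w : Fin n → ℂ) = 0 := by
    rw [sub_smul, ← hgw, ← hexp, sub_self]
  have hμl : μ = Complex.exp l := by
    rcases smul_eq_zero.1 this with h | h
    · exact sub_eq_zero.1 h
    · exact absurd h hwne
  have hev2 : Module.End.HasEigenvalue f l :=
    Module.End.hasEigenvalue_of_hasEigenvector ⟨Module.End.mem_eigenspace_iff.2 hfw, hwne⟩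
  have hmem := Module.End.hasEigenvalue_iff_mem_spectrum.1 hev2
  rw [hf, AlgEquiv.spectrum_eq] at hmem
  exact ⟨l, hmem, hμl⟩

lemma map_norm_eq (A : Matrix (Fin n) (Fin n) ℝ) : ‖A.map (algebraMap ℝ ℂ)‖ = ‖A‖ := by
  rw [Matrix.linfty_opNorm_def, Matrix.linfty_opNorm_def]
  congr 1
  ext i
  congr 1
  ext j
  simp [Matrix.map_apply]

lemma exp_map_comm (A : Matrix (Fin n) (Fin n) ℝ) :
    (exp A).map (algebraMap ℝ ℂ) = exp (A.map (algebraMap ℝ ℂ)) := by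
  classical
  let Psi : Matrix (Fin n) (Fin n) ℝ →+* Matrix (Fin n) (Fin n) ℂ :=
    (Complex.ofRealHom : ℝ →+* ℂ).mapMatrix
  have hPsic : Continuous Psi := by
    have : (Psi : Matrix (Fin n) (Fin n) ℝ → Matrix (Fin n) (Fin n) ℂ) =
        fun A => A.map (algebraMap ℝ ℂ) := rfl
    rw [this]
    exact continuous_pi fun i => continuous_pi fun j =>
      Complex.continuous_ofReal.comp ((continuous_apply j).comp (continuous_apply i))
  have h1 : Psi (exp A) = exp (Psi A) := map_exp Psi hPsic A
  have h2 : (exp : Matrix (Fin n) (Fin n) ℂ → _) = exp := rfl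
  calc (exp A).map (algebraMap ℝ ℂ) = Psi (exp A) := rfl
  _ = exp (Psi A) := h1
  _ = exp (A.map (algebraMap ℝ ℂ)) := by rw [h2]; rfl

lemma hurwitz_pow_small (hn : 0 < n) (F : Matrix (Fin n) (Fin n) ℝ)
    (hF : ∀ μ ∈ spectrum ℂ (F.map (algebraMap ℝ ℂ)), μ.re < 0) :
    ∃ m : ℕ, 0 < m ∧ ‖exp ((m : ℝ) • F)‖ < 1 := by
  classical
  haveI : Nonempty (Fin n) := Fin.pos_iff_nonempty.1 hn
  set B := F.map (algebraMap ℝ ℂ) with hB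
  set a := exp B with ha
  have hρ : spectralRadius ℂ a < 1 := by
    have h1 : ∀ z ∈ spectrum ℂ a, ‖z‖₊ < 1 := by
      intro z hz
      obtain ⟨l, hl, rfl⟩ := spec_exp B z hz
      have : ‖Complex.exp l‖ < 1 := by
        rw [Complex.norm_exp]
        exact Real.exp_lt_one_iff.2 (hF l hl)
      exact_mod_cast this
    simpa using spectrum.spectralRadius_lt_of_forall_lt a (r := 1) h1
  have hT := spectrum.pow_nnnorm_pow_one_div_tendsto_nhds_spectralRadius a
  have hev : ∀ᶠ k : ℕ in atTop, (‖a ^ k‖₊ : ENNReal) ^ (1 / (k : ℝ)) < 1 :=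
    hT.eventually_lt_const hρ
  obtain ⟨m, hm, hm1⟩ := (hev.and (eventually_ge_atTop 1)).exists
  have hmne : (m : ℝ) ≠ 0 := Nat.cast_ne_zero.2 (by omega)
  have hlt : (‖a ^ m‖₊ : ENNReal) < 1 := by
    have := ENNReal.rpow_lt_one hm (by positivity : (0 : ℝ) < m)
    rwa [← ENNReal.rpow_mul, one_div_mul_cancel hmne, ENNReal.rpow_one] at this
  have hlt' : ‖a ^ m‖ < 1 := by
    have := ENNReal.coe_lt_coe.1 (by simpa using hlt)
    exact_mod_cast this
  refine ⟨m, by omega, ?_⟩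
  rw [← map_norm_eq (exp ((m : ℝ) • F))]
  have : (exp ((m : ℝ) • F)).map (algebraMap ℝ ℂ) = a ^ m := by
    rw [exp_map_comm]
    have hsm : ((m : ℝ) • F).map (algebraMap ℝ ℂ) = (m : ℂ) • B := by
      ext i j
      simp [Matrix.map_apply, hB]
    rw [hsm, Nat.cast_smul_eq_nsmul ℂ m B, Matrix.exp_nsmul]
  rw [this]
  exact hlt'

lemma hurwitz_decay (F : Matrix (Fin n) (Fin n) ℝ)
    (hF : ∀ μ ∈ spectrum ℂ (F.map (algebraMap ℝ ℂ)), μ.re < 0) :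
    ∃ K α : ℝ, 1 ≤ K ∧ 0 < α ∧ ∀ t : ℝ, 0 ≤ t → ∀ v : Fin n → ℝ,
      ‖(exp (t • F)).mulVec v‖ ≤ K * Real.exp (-(α * t)) * ‖v‖ := by
  classical
  rcases Nat.eq_zero_or_pos n with hn | hn
  · refine ⟨1, 1, le_refl 1, one_pos, fun t ht v => ?_⟩
    subst hn
    have h0 : (exp (t • F)).mulVec v = 0 := Subsingleton.elim _ _
    rw [h0, norm_zero]
    positivity
  haveI : Nonempty (Fin n) := Fin.pos_iff_nonempty.1 hn
  obtain ⟨m, hm0, hm⟩ := hurwitz_pow_small hn F hF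
  set T : ℝ := (m : ℝ) with hTdef
  have hT0 : (0 : ℝ) < T := by rw [hTdef]; exact_mod_cast hm0
  set c : ℝ := max ‖exp (T • F)‖ (1 / 2) with hcdef
  have hc0 : (0 : ℝ) < c := lt_of_lt_of_le one_half_pos (le_max_right _ _)
  have hc1 : c < 1 := max_lt hm one_half_lt_one
  have hEc : ‖exp (T • F)‖ ≤ c := le_max_left _ _
  have hcont : Continuous fun r : ℝ => exp (r • F) :=
    exp_continuous.comp (continuous_id.smul continuous_const)
  obtain ⟨M0, hM0⟩ := isCompact_Icc.exists_bound_of_continuousOn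
    (s := Set.Icc (0 : ℝ) T) hcont.continuousOn
  set M : ℝ := max M0 1 with hMdef
  have hM1 : (1 : ℝ) ≤ M := le_max_right _ _
  have hMb : ∀ r ∈ Set.Icc (0 : ℝ) T, ‖exp (r • F)‖ ≤ M :=
    fun r hr => le_trans (hM0 r hr) (le_max_left _ _)
  have hlogc : Real.log c < 0 := Real.log_neg hc0 hc1
  set α : ℝ := -Real.log c / T with hαdef
  have hα0 : 0 < α := div_pos (neg_pos.2 hlogc) hT0
  refine ⟨M / c, α, ?_, hα0, ?_⟩
  · calc (1 : ℝ) ≤ M := hM1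
    _ ≤ M / c := le_div_self (by linarith) hc0 hc1.le
  intro t ht v
  set k := ⌊t / T⌋₊ with hkdef
  have hk1 : (k : ℝ) * T ≤ t := by
    have h := Nat.floor_le (div_nonneg ht hT0.le)
    calc (k : ℝ) * T ≤ t / T * T := mul_le_mul_of_nonneg_right h hT0.le
    _ = t := div_mul_cancel₀ t hT0.ne'
  have hk2 : t < ((k : ℝ) + 1) * T := by
    have h := Nat.lt_floor_add_one (t / T)
    calc t = t / T * T := (div_mul_cancel₀ t hT0.ne').symm
    _ < ((k : ℝ) + 1) * T := mul_lt_mul_of_pos_right h hT0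
  set r := t - (k : ℝ) * T with hrdef
  have hr0 : 0 ≤ r := by simp [hrdef]; linarith
  have hrT : r ≤ T := by simp [hrdef]; nlinarith
  have hsplit : exp (t • F) = (exp (T • F)) ^ k * exp (r • F) := by
    have h1 : t • F = ((k : ℝ) * T) • F + r • F := by
      rw [← add_smul]
      congr 1
      simp [hrdef]
    have h2 : Commute (((k : ℝ) * T) • F) (r • F) :=
      ((Commute.refl F).smul_left _).smul_right _
    rw [h1, Matrix.exp_add_of_commute _ _ h2]
    congr 1
    have h3 : ((k : ℝ) * T) • F = k • (T • F) := by
      rw [← Nat.cast_smul_eq_nsmul ℝ k (T • F), smul_smul]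
    rw [h3, Matrix.exp_nsmul]
  have hnorm : ‖exp (t • F)‖ ≤ c ^ k * M := by
    rw [hsplit]
    calc ‖(exp (T • F)) ^ k * exp (r • F)‖
        ≤ ‖(exp (T • F)) ^ k‖ * ‖exp (r • F)‖ := norm_mul_le _ _
    _ ≤ ‖exp (T • F)‖ ^ k * M := by
        apply mul_le_mul (norm_pow_le _ k) (hMb r ⟨hr0, hrT⟩) (norm_nonneg _)
          (pow_nonneg (norm_nonneg _) k)
    _ ≤ c ^ k * M := by
        apply mul_le_mul_of_nonneg_right (pow_le_pow_left₀ (norm_nonneg _) hEc k)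
        linarith
  have hck : c ^ k ≤ Real.exp (-(α * t)) / c := by
    have h3 : c ^ k = Real.exp ((k : ℝ) * Real.log c) := by
      rw [Real.exp_nat_mul, Real.exp_log hc0]
    have h4 : Real.exp (-(α * t)) / c = Real.exp (-(α * t) - Real.log c) := by
      rw [Real.exp_sub, Real.exp_log hc0]
    rw [h3, h4]
    apply Real.exp_le_exp.2
    have h5 : -(α * t) = Real.log c * (t / T) := by
      rw [hαdef]
      field_simp
    have h6 : t / T ≤ (k : ℝ) + 1 := (div_le_iff₀ hT0).2 hk2.le
    have h7 : ((k : ℝ) + 1) * Real.log c ≤ t / T * Real.log c :=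
      mul_le_mul_of_nonpos_right h6 hlogc.le
    rw [h5]
    linarith
  calc ‖(exp (t • F)).mulVec v‖ ≤ ‖exp (t • F)‖ * ‖v‖ :=
      Matrix.linfty_opNorm_mulVec _ _
  _ ≤ c ^ k * M * ‖v‖ := mul_le_mul_of_nonneg_right hnorm (norm_nonneg _)
  _ ≤ Real.exp (-(α * t)) / c * M * ‖v‖ := by
      apply mul_le_mul_of_nonneg_right (mul_le_mul_of_nonneg_right hck (by linarith))
        (norm_nonneg _)
  _ = M / c * Real.exp (-(α * t)) * ‖v‖ := by ring

open MeasureTheory in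
lemma integral_exp_neg_mul_Ioi {b : ℝ} (hb : 0 < b) (t : ℝ) :
    ∫ s in Set.Ioi t, Real.exp (-(b * s)) = Real.exp (-(b * t)) / b := by
  have hderiv : ∀ x ∈ Set.Ici t,
      HasDerivAt (fun s => -Real.exp (-(b * s)) / b) (Real.exp (-(b * x))) x := by
    intro x _
    have h1 : HasDerivAt (fun s : ℝ => -(b * s)) (-b) x := by
      simpa using ((hasDerivAt_id x).const_mul b).fun_neg
    have h2 := (h1.exp).fun_neg.div_const b
    convert h2 using 1
    · rfl
    · rfl
    · field_simp
  have hint : IntegrableOn (fun s => Real.exp (-(b * s))) (Set.Ioi t) := by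
    simpa [neg_mul] using exp_neg_integrableOn_Ioi t hb
  have htend : Tendsto (fun s => -Real.exp (-(b * s)) / b) atTop (nhds 0) := by
    have h3 : Tendsto (fun s : ℝ => b * s) atTop atTop :=
      Tendsto.const_mul_atTop hb tendsto_id
    have h4 : Tendsto (fun s : ℝ => Real.exp (-(b * s))) atTop (nhds 0) :=
      Real.tendsto_exp_atBot.comp (tendsto_neg_atBot_iff.2 h3)
    simpa using h4.neg.div_const b
  have := integral_Ioi_of_hasDerivAt_of_tendsto' hderiv hint htend
  rw [this]
  field_simp
  ring

lemma spectrum_transpose (A : Matrix (Fin n) (Fin n) ℂ) :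
    spectrum ℂ Aᵀ = spectrum ℂ A := by
  classical
  ext μ
  rw [spectrum.mem_iff, spectrum.mem_iff]
  have h1 : algebraMap ℂ (Matrix (Fin n) (Fin n) ℂ) μ - Aᵀ =
      (algebraMap ℂ (Matrix (Fin n) (Fin n) ℂ) μ - A)ᵀ := by
    rw [Matrix.transpose_sub]
    congr 1
    rw [Algebra.algebraMap_eq_smul_one, Matrix.transpose_smul, Matrix.transpose_one]
  rw [h1]
  constructor
  · intro h hu
    exact h (by rwa [Matrix.isUnit_iff_isUnit_det, Matrix.det_transpose,
      ← Matrix.isUnit_iff_isUnit_det])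
  · intro h hu
    exact h (by rwa [Matrix.isUnit_iff_isUnit_det, Matrix.det_transpose,
      ← Matrix.isUnit_iff_isUnit_det] at hu)

end StableManifoldAux

set_option maxHeartbeats 2000000 in
/-- Decay of all iterates of the stable manifold (Picard-type) iteration
`q_{k+1}(t) = e^{Ft}ξ + ∫₀^t e^{F(t−s)} n_s(s, q_k, p_k) ds`,
`p_{k+1}(t) = −∫_t^∞ e^{−Fᵀ(t−s)} n_u(s, q_k, p_k) ds`, for a Hurwitz matrix `F` and
nonlinearities `n_s, n_u` which, together with their Lipschitz constants in `(q,p)`,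
are of order `O(‖(q,p)‖²)` near `0` uniformly in `t`: for `‖ξ‖` sufficiently small,
`q_k(t) → 0` and `p_k(t) → 0` as `t → ∞` for every `k`. -/
theorem stable_manifold_iterates_decay {n : ℕ}
    (F : Matrix (Fin n) (Fin n) ℝ)
    (hF : ∀ μ ∈ spectrum ℂ (F.map (algebraMap ℝ ℂ)), μ.re < 0)
    (ns nu : ℝ → (Fin n → ℝ) → (Fin n → ℝ) → (Fin n → ℝ))
    (hcont : Continuous fun z : ℝ × (Fin n → ℝ) × (Fin n → ℝ) => ns z.1 z.2.1 z.2.2)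
    (hcont' : Continuous fun z : ℝ × (Fin n → ℝ) × (Fin n → ℝ) => nu z.1 z.2.1 z.2.2)
    (C δ : ℝ) (hC : 0 < C) (hδ : 0 < δ)
    (hbound : ∀ t ≥ (0 : ℝ), ∀ q p : Fin n → ℝ, ‖q‖ + ‖p‖ ≤ δ →
      ‖ns t q p‖ ≤ C * (‖q‖ + ‖p‖) ^ 2 ∧ ‖nu t q p‖ ≤ C * (‖q‖ + ‖p‖) ^ 2)
    (hlip : ∀ r ∈ Set.Ioc (0 : ℝ) δ, ∀ t ≥ (0 : ℝ), ∀ q p q' p' : Fin n → ℝ,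
      ‖q‖ + ‖p‖ ≤ r → ‖q'‖ + ‖p'‖ ≤ r →
      ‖ns t q p - ns t q' p'‖ ≤ C * r ^ 2 * (‖q - q'‖ + ‖p - p'‖) ∧
      ‖nu t q p - nu t q' p'‖ ≤ C * r ^ 2 * (‖q - q'‖ + ‖p - p'‖))
    (q p : (Fin n → ℝ) → ℕ → ℝ → (Fin n → ℝ))
    (hq0 : ∀ ξ t, q ξ 0 t = (NormedSpace.exp (t • F)).mulVec ξ)
    (hp0 : ∀ ξ t, p ξ 0 t = 0)
    (hqrec : ∀ ξ k t, q ξ (k + 1) t = (NormedSpace.exp (t • F)).mulVec ξ +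
      ∫ s in (0 : ℝ)..t,
        (NormedSpace.exp ((t - s) • F)).mulVec (ns s (q ξ k s) (p ξ k s)))
    (hprec : ∀ ξ k t, p ξ (k + 1) t =
      -∫ s in Set.Ioi t,
        (NormedSpace.exp (-((t - s) • Fᵀ))).mulVec (nu s (q ξ k s) (p ξ k s))) :
    ∃ ε > 0, ∀ ξ : Fin n → ℝ, ‖ξ‖ < ε → ∀ k : ℕ,
      Tendsto (fun t => q ξ k t) atTop (nhds 0) ∧
      Tendsto (fun t => p ξ k t) atTop (nhds 0) := by
  classical
  obtain ⟨K₁, α₁, hK₁, hα₁, hdec₁⟩ := hurwitz_decay F hF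
  have hFT : ∀ μ ∈ spectrum ℂ ((Fᵀ).map (algebraMap ℝ ℂ)), μ.re < 0 := by
    intro μ hμ
    apply hF
    rwa [Matrix.transpose_map, spectrum_transpose] at hμ
  obtain ⟨K₂, α₂, hK₂, hα₂, hdec₂⟩ := hurwitz_decay Fᵀ hFT
  set K := max K₁ K₂ with hKdef
  set α := min α₁ α₂ with hαdef
  have hK : (1 : ℝ) ≤ K := le_trans hK₁ (le_max_left _ _)
  have hK0 : (0 : ℝ) < K := lt_of_lt_of_le one_pos hK
  have hα : (0 : ℝ) < α := lt_min hα₁ hα₂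
  set β := α / 2 with hβdef
  have hβ : (0 : ℝ) < β := by positivity
  have hdecF : ∀ t : ℝ, 0 ≤ t → ∀ v : Fin n → ℝ,
      ‖(NormedSpace.exp (t • F)).mulVec v‖ ≤ K * Real.exp (-(α * t)) * ‖v‖ := by
    intro t ht v
    refine le_trans (hdec₁ t ht v) ?_
    have h1 : Real.exp (-(α₁ * t)) ≤ Real.exp (-(α * t)) := by
      apply Real.exp_le_exp.2
      have : α * t ≤ α₁ * t := mul_le_mul_of_nonneg_right (min_le_left _ _) ht
      linarith
    have := mul_le_mul (le_max_left K₁ K₂) h1 (Real.exp_pos _).le (le_of_lt hK0)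
    exact mul_le_mul_of_nonneg_right this (norm_nonneg _)
  have hdecFT : ∀ t : ℝ, 0 ≤ t → ∀ v : Fin n → ℝ,
      ‖(NormedSpace.exp (t • Fᵀ)).mulVec v‖ ≤ K * Real.exp (-(α * t)) * ‖v‖ := by
    intro t ht v
    refine le_trans (hdec₂ t ht v) ?_
    have h1 : Real.exp (-(α₂ * t)) ≤ Real.exp (-(α * t)) := by
      apply Real.exp_le_exp.2
      have : α * t ≤ α₂ * t := mul_le_mul_of_nonneg_right (min_le_right _ _) ht
      linarith
    have := mul_le_mul (le_max_right K₁ K₂) h1 (Real.exp_pos _).le (le_of_lt hK0)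
    exact mul_le_mul_of_nonneg_right this (norm_nonneg _)
  set E : ℝ := 4 * C * K ^ 3 / β + 2 * C * K ^ 3 / α with hEdef
  have hE : 0 < E := by positivity
  refine ⟨min (δ / (2 * K)) (K / E), lt_min (by positivity) (by positivity), ?_⟩
  intro ξ hξ
  have hξ0 : 0 ≤ ‖ξ‖ := norm_nonneg _
  have hξδ : 2 * K * ‖ξ‖ ≤ δ := by
    have h1 : ‖ξ‖ ≤ δ / (2 * K) := le_of_lt (lt_of_lt_of_le hξ (min_le_left _ _))
    calc 2 * K * ‖ξ‖ ≤ 2 * K * (δ / (2 * K)) :=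
        mul_le_mul_of_nonneg_left h1 (by positivity)
    _ = δ := by field_simp
  have hξE : E * ‖ξ‖ ≤ K := by
    have h1 : ‖ξ‖ ≤ K / E := le_of_lt (lt_of_lt_of_le hξ (min_le_right _ _))
    calc E * ‖ξ‖ ≤ E * (K / E) := mul_le_mul_of_nonneg_left h1 hE.le
    _ = K := by field_simp
  -- the key induction
  have main : ∀ k : ℕ, ∀ t : ℝ, 0 ≤ t →
      ‖q ξ k t‖ + ‖p ξ k t‖ ≤ 2 * K * ‖ξ‖ * Real.exp (-(β * t)) := by
    intro k
    induction k with
    | zero =>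
      intro t ht
      rw [hq0, hp0, norm_zero, add_zero]
      refine le_trans (hdecF t ht ξ) ?_
      have h1 : Real.exp (-(α * t)) ≤ Real.exp (-(β * t)) := by
        apply Real.exp_le_exp.2
        have : β * t ≤ α * t := by
          apply mul_le_mul_of_nonneg_right _ ht
          rw [hβdef]; linarith
        linarith
      nlinarith [mul_le_mul_of_nonneg_right (mul_le_mul_of_nonneg_left h1 hK0.le) hξ0,
        mul_nonneg (mul_nonneg hK0.le (Real.exp_pos (-(β * t))).le) hξ0]
    | succ k ih =>
      intro t ht
      -- nonlinearity bounds along the iterate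
      have hns : ∀ s : ℝ, 0 ≤ s →
          ‖ns s (q ξ k s) (p ξ k s)‖ ≤ 4 * C * K ^ 2 * ‖ξ‖ ^ 2 * Real.exp (-(α * s)) ∧
          ‖nu s (q ξ k s) (p ξ k s)‖ ≤ 4 * C * K ^ 2 * ‖ξ‖ ^ 2 * Real.exp (-(α * s)) := by
        intro s hs
        have hg := ih s hs
        have hgδ : ‖q ξ k s‖ + ‖p ξ k s‖ ≤ δ := by
          refine le_trans hg (le_trans ?_ hξδ)
          have h1 : Real.exp (-(β * s)) ≤ 1 := by
            rw [Real.exp_le_one_iff]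
            have : 0 ≤ β * s := by positivity
            linarith
          nlinarith [mul_le_mul_of_nonneg_left h1
            (by positivity : (0:ℝ) ≤ 2 * K * ‖ξ‖)]
        obtain ⟨h1, h2⟩ := hbound s hs _ _ hgδ
        have hsq : (‖q ξ k s‖ + ‖p ξ k s‖) ^ 2 ≤
            (2 * K * ‖ξ‖ * Real.exp (-(β * s))) ^ 2 := by
          apply pow_le_pow_left₀ (by positivity) hg
        have hexp2 : Real.exp (-(β * s)) * Real.exp (-(β * s)) = Real.exp (-(α * s)) := by
          rw [← Real.exp_add]
          congr 1
          rw [hβdef]; ring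
        have hsq' : C * (‖q ξ k s‖ + ‖p ξ k s‖) ^ 2 ≤
            4 * C * K ^ 2 * ‖ξ‖ ^ 2 * Real.exp (-(α * s)) := by
          have := mul_le_mul_of_nonneg_left hsq hC.le
          refine le_trans this (le_of_eq ?_)
          rw [← hexp2]; ring
        exact ⟨le_trans h1 hsq', le_trans h2 hsq'⟩
      -- bound the q part
      have hqb : ‖q ξ (k + 1) t‖ ≤
          (K * ‖ξ‖ + 4 * C * K ^ 3 / β * ‖ξ‖ ^ 2) * Real.exp (-(β * t)) := by
        rw [hqrec]
        refine le_trans (norm_add_le _ _) ?_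
        have ha : ‖(NormedSpace.exp (t • F)).mulVec ξ‖ ≤ K * ‖ξ‖ * Real.exp (-(β * t)) := by
          refine le_trans (hdecF t ht ξ) ?_
          have h1 : Real.exp (-(α * t)) ≤ Real.exp (-(β * t)) := by
            apply Real.exp_le_exp.2
            have : β * t ≤ α * t := by
              apply mul_le_mul_of_nonneg_right _ ht
              rw [hβdef]; linarith
            linarith
          nlinarith [mul_le_mul_of_nonneg_right (mul_le_mul_of_nonneg_left h1 hK0.le) hξ0,
            mul_nonneg (mul_nonneg hK0.le (Real.exp_pos (-(β * t))).le) hξ0]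
        have hb : ‖∫ s in (0:ℝ)..t,
              (NormedSpace.exp ((t - s) • F)).mulVec (ns s (q ξ k s) (p ξ k s))‖
            ≤ 4 * C * K ^ 3 * ‖ξ‖ ^ 2 * Real.exp (-(α * t)) * t := by
          have hstep : ∀ s ∈ Set.uIoc (0:ℝ) t,
              ‖(NormedSpace.exp ((t - s) • F)).mulVec (ns s (q ξ k s) (p ξ k s))‖ ≤
              4 * C * K ^ 3 * ‖ξ‖ ^ 2 * Real.exp (-(α * t)) := by
            intro s hs
            rw [Set.uIoc_of_le ht] at hs
            have hs0 : 0 ≤ s := hs.1.le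
            have hts : 0 ≤ t - s := by linarith [hs.2]
            refine le_trans (hdecF (t - s) hts _) ?_
            have h2 := (hns s hs0).1
            calc K * Real.exp (-(α * (t - s))) * ‖ns s (q ξ k s) (p ξ k s)‖
                ≤ K * Real.exp (-(α * (t - s))) *
                  (4 * C * K ^ 2 * ‖ξ‖ ^ 2 * Real.exp (-(α * s))) :=
                  mul_le_mul_of_nonneg_left h2 (by positivity)
            _ = 4 * C * K ^ 3 * ‖ξ‖ ^ 2 *
                  (Real.exp (-(α * (t - s))) * Real.exp (-(α * s))) := by ring
            _ = 4 * C * K ^ 3 * ‖ξ‖ ^ 2 * Real.exp (-(α * t)) := by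
                  rw [← Real.exp_add]; congr 1; ring
          have hC0 := intervalIntegral.norm_integral_le_of_norm_le_const hstep
          rwa [sub_zero, abs_of_nonneg ht] at hC0
        have hte : t * Real.exp (-(α * t)) ≤ 1 / β * Real.exp (-(β * t)) := by
          have h5 : t * β ≤ Real.exp (β * t) := by
            nlinarith [Real.add_one_le_exp (β * t)]
          have h7 : t ≤ Real.exp (β * t) / β := (le_div_iff₀ hβ).2 h5
          have h8 : t * Real.exp (-(β * t)) ≤ 1 / β :=
            calc t * Real.exp (-(β * t)) ≤ Real.exp (β * t) / β * Real.exp (-(β * t)) :=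
                mul_le_mul_of_nonneg_right h7 (Real.exp_pos _).le
            _ = 1 / β := by rw [div_mul_eq_mul_div, ← Real.exp_add]; simp
          have h9 : Real.exp (-(α * t)) = Real.exp (-(β * t)) * Real.exp (-(β * t)) := by
            rw [← Real.exp_add]; congr 1; rw [hβdef]; ring
          calc t * Real.exp (-(α * t))
              = t * Real.exp (-(β * t)) * Real.exp (-(β * t)) := by rw [h9]; ring
          _ ≤ 1 / β * Real.exp (-(β * t)) :=
              mul_le_mul_of_nonneg_right h8 (Real.exp_pos _).le
        refine le_trans (add_le_add ha hb) ?_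
        have h11 : 4 * C * K ^ 3 * ‖ξ‖ ^ 2 * (t * Real.exp (-(α * t))) ≤
            4 * C * K ^ 3 * ‖ξ‖ ^ 2 * (1 / β * Real.exp (-(β * t))) :=
          mul_le_mul_of_nonneg_left hte (by positivity)
        have h12 : (K * ‖ξ‖ + 4 * C * K ^ 3 / β * ‖ξ‖ ^ 2) * Real.exp (-(β * t)) =
            K * ‖ξ‖ * Real.exp (-(β * t)) +
            4 * C * K ^ 3 * ‖ξ‖ ^ 2 * (1 / β * Real.exp (-(β * t))) := by ring
        have h13 : 4 * C * K ^ 3 * ‖ξ‖ ^ 2 * Real.exp (-(α * t)) * t =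
            4 * C * K ^ 3 * ‖ξ‖ ^ 2 * (t * Real.exp (-(α * t))) := by ring
        rw [h12, h13]
        linarith
      -- bound the p part
      have hpb : ‖p ξ (k + 1) t‖ ≤
          2 * C * K ^ 3 / α * ‖ξ‖ ^ 2 * Real.exp (-(β * t)) := by
        rw [hprec, norm_neg]
        have h2α : (0:ℝ) < 2 * α := by positivity
        set c0 : ℝ := 4 * C * K ^ 3 * ‖ξ‖ ^ 2 * Real.exp (α * t) with hc0def
        have hc00 : 0 ≤ c0 := by positivity
        have hfb : ∀ s ∈ Set.Ioi t,
            ‖(NormedSpace.exp (-((t - s) • Fᵀ))).mulVec (nu s (q ξ k s) (p ξ k s))‖ ≤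
            c0 * Real.exp (-(2 * α * s)) := by
          intro s hs
          have hts : 0 ≤ s - t := by simpa using (Set.mem_Ioi.1 hs).le
          have hs0 : 0 ≤ s := le_trans ht (by linarith)
          have hker : -((t - s) • Fᵀ) = (s - t) • Fᵀ := by rw [← neg_smul, neg_sub]
          rw [hker]
          refine le_trans (hdecFT (s - t) hts _) ?_
          have h2 := (hns s hs0).2
          calc K * Real.exp (-(α * (s - t))) * ‖nu s (q ξ k s) (p ξ k s)‖
              ≤ K * Real.exp (-(α * (s - t))) *
                (4 * C * K ^ 2 * ‖ξ‖ ^ 2 * Real.exp (-(α * s))) :=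
                mul_le_mul_of_nonneg_left h2 (by positivity)
          _ = 4 * C * K ^ 3 * ‖ξ‖ ^ 2 *
                (Real.exp (-(α * (s - t))) * Real.exp (-(α * s))) := by ring
          _ = c0 * Real.exp (-(2 * α * s)) := by
                rw [hc0def, ← Real.exp_add]
                have : Real.exp (α * t) * Real.exp (-(2 * α * s)) =
                    Real.exp (α * t + -(2 * α * s)) := (Real.exp_add _ _).symm
                rw [mul_assoc (4 * C * K ^ 3 * ‖ξ‖ ^ 2), this]
                congr 1
                ring
        have hint : IntegrableOn (fun s => c0 * Real.exp (-(2 * α * s))) (Set.Ioi t) := by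
          have := (exp_neg_integrableOn_Ioi t h2α).const_mul c0
          simpa [neg_mul, IntegrableOn] using this
        have h1 : ‖∫ s in Set.Ioi t,
              (NormedSpace.exp (-((t - s) • Fᵀ))).mulVec (nu s (q ξ k s) (p ξ k s))‖
            ≤ ∫ s in Set.Ioi t,
              ‖(NormedSpace.exp (-((t - s) • Fᵀ))).mulVec (nu s (q ξ k s) (p ξ k s))‖ :=
          norm_integral_le_integral_norm _
        have h2 : ∫ s in Set.Ioi t,
              ‖(NormedSpace.exp (-((t - s) • Fᵀ))).mulVec (nu s (q ξ k s) (p ξ k s))‖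
            ≤ ∫ s in Set.Ioi t, c0 * Real.exp (-(2 * α * s)) := by
          refine integral_mono_of_nonneg (ae_of_all _ fun s => norm_nonneg _) hint ?_
          exact (ae_restrict_iff' measurableSet_Ioi).2 (ae_of_all _ hfb)
        have h3 : ∫ s in Set.Ioi t, c0 * Real.exp (-(2 * α * s)) =
            c0 * (Real.exp (-(2 * α * t)) / (2 * α)) := by
          rw [MeasureTheory.integral_const_mul, integral_exp_neg_mul_Ioi h2α]
        have h4 : Real.exp (α * t) * Real.exp (-(2 * α * t)) = Real.exp (-(α * t)) := by
          rw [← Real.exp_add]; congr 1; ring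
        have h5 : Real.exp (-(α * t)) ≤ Real.exp (-(β * t)) := by
          apply Real.exp_le_exp.2
          have : β * t ≤ α * t := by
            apply mul_le_mul_of_nonneg_right _ ht
            rw [hβdef]; linarith
          linarith
        have h6 : c0 * (Real.exp (-(2 * α * t)) / (2 * α)) =
            2 * C * K ^ 3 / α * ‖ξ‖ ^ 2 * Real.exp (-(α * t)) := by
          rw [hc0def, ← h4]
          field_simp
          ring
        have h7 : 2 * C * K ^ 3 / α * ‖ξ‖ ^ 2 * Real.exp (-(α * t)) ≤
            2 * C * K ^ 3 / α * ‖ξ‖ ^ 2 * Real.exp (-(β * t)) :=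
          mul_le_mul_of_nonneg_left h5 (by positivity)
        calc ‖∫ s in Set.Ioi t,
              (NormedSpace.exp (-((t - s) • Fᵀ))).mulVec (nu s (q ξ k s) (p ξ k s))‖
            ≤ ∫ s in Set.Ioi t, c0 * Real.exp (-(2 * α * s)) := le_trans h1 h2
        _ = 2 * C * K ^ 3 / α * ‖ξ‖ ^ 2 * Real.exp (-(α * t)) := by rw [h3, h6]
        _ ≤ 2 * C * K ^ 3 / α * ‖ξ‖ ^ 2 * Real.exp (-(β * t)) := h7
      have hsum : K * ‖ξ‖ + 4 * C * K ^ 3 / β * ‖ξ‖ ^ 2 + 2 * C * K ^ 3 / α * ‖ξ‖ ^ 2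
          ≤ 2 * K * ‖ξ‖ := by
        have h1 : E * ‖ξ‖ * ‖ξ‖ ≤ K * ‖ξ‖ := mul_le_mul_of_nonneg_right hξE hξ0
        calc K * ‖ξ‖ + 4 * C * K ^ 3 / β * ‖ξ‖ ^ 2 + 2 * C * K ^ 3 / α * ‖ξ‖ ^ 2
            = K * ‖ξ‖ + E * ‖ξ‖ * ‖ξ‖ := by rw [hEdef]; ring
        _ ≤ 2 * K * ‖ξ‖ := by linarith
      calc ‖q ξ (k + 1) t‖ + ‖p ξ (k + 1) t‖
          ≤ (K * ‖ξ‖ + 4 * C * K ^ 3 / β * ‖ξ‖ ^ 2) * Real.exp (-(β * t)) +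
            2 * C * K ^ 3 / α * ‖ξ‖ ^ 2 * Real.exp (-(β * t)) := add_le_add hqb hpb
      _ = (K * ‖ξ‖ + 4 * C * K ^ 3 / β * ‖ξ‖ ^ 2 + 2 * C * K ^ 3 / α * ‖ξ‖ ^ 2) *
            Real.exp (-(β * t)) := by ring
      _ ≤ 2 * K * ‖ξ‖ * Real.exp (-(β * t)) :=
          mul_le_mul_of_nonneg_right hsum (Real.exp_pos _).le
  -- conclude convergence
  intro k
  have htend : Tendsto (fun t : ℝ => 2 * K * ‖ξ‖ * Real.exp (-(β * t))) atTop (nhds 0) := by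
    have h3 : Tendsto (fun s : ℝ => β * s) atTop atTop :=
      Tendsto.const_mul_atTop hβ tendsto_id
    have h4 : Tendsto (fun s : ℝ => Real.exp (-(β * s))) atTop (nhds 0) :=
      Real.tendsto_exp_atBot.comp (tendsto_neg_atBot_iff.2 h3)
    simpa using h4.const_mul (2 * K * ‖ξ‖)
  constructor
  · apply squeeze_zero_norm' _ htend
    filter_upwards [eventually_ge_atTop (0 : ℝ)] with t ht
    have := main k t ht
    have h0 : 0 ≤ ‖p ξ k t‖ := norm_nonneg _
    linarith
  · apply squeeze_zero_norm' _ htend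
    filter_upwards [eventually_ge_atTop (0 : ℝ)] with t ht
    have := main k t ht
    have h0 : 0 ≤ ‖q ξ k t‖ := norm_nonneg _
    linarith
end
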